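/- arXiv:1406.1003 — 2 statements merged into one kernel-verified Lean document; each statement's English description precedes it below -/
import Mathlib

section
/- Let W be a finite Weyl group with simple roots Δ, w ∈ W and α ∈ Δ with s_α w > w such that the positive root w^{-1}(α) is not simple. Then ℓ(w_Δ w^{-1} s_α w) < ℓ(w_Δ w^{-1} s_α) + ℓ(w); more precisely ℓ(w_Δ w^{-1} s_α w) = ℓ(w_Δ) − ℓ(s_{w^{-1}(α)}) and ℓ(w_Δ w^{-1} s_α) + ℓ(w) = ℓ(w_Δ) − 1. -/
open Module

variable {V : Type} [AddCommGroup V] [Module ℝ V]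

/-- A reduced crystallographic root system in the dual of `V`, with a chosen
positive system. -/
structure RootSystemData (V : Type) [AddCommGroup V] [Module ℝ V] where
  roots : Finset (Module.Dual ℝ V)
  coroot : Module.Dual ℝ V → V
  pos : Finset (Module.Dual ℝ V)
  root_ne_zero : ∀ α ∈ roots, α ≠ 0
  coroot_self : ∀ α ∈ roots, α (coroot α) = 2
  reflection_mem : ∀ α ∈ roots, ∀ β ∈ roots, β - β (coroot α) • α ∈ roots
  crystallographic : ∀ α ∈ roots, ∀ β ∈ roots, ∃ n : ℤ, β (coroot α) = (n : ℝ)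
  reduced : ∀ α ∈ roots, ∀ t : ℝ, t • α ∈ roots → t = 1 ∨ t = -1
  pos_subset : pos ⊆ roots
  pos_or_neg : ∀ α ∈ roots, α ∈ pos ∨ -α ∈ pos
  pos_not_neg : ∀ α ∈ pos, -α ∉ pos
  pos_add : ∀ α ∈ pos, ∀ β ∈ pos, α + β ∈ roots → α + β ∈ pos

/-- The contragredient action of a linear automorphism of `V` on the dual space:
`(w β)(v) = β (w⁻¹ v)`. -/
noncomputable def dualAct (w : V ≃ₗ[ℝ] V) (β : Module.Dual ℝ V) : Module.Dual ℝ V :=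
  β.comp w.symm.toLinearMap

namespace RootSystemData

variable (D : RootSystemData V)

/-- `ℓ(v) = Σ_{β ∈ Σ⁺} |⟨v, β⟩|`, the length of the translation by `v`. -/
noncomputable def coLen (v : V) : ℝ := ∑ β ∈ D.pos, |β v|

/-- The reflection `s_α` acting on `V`, as a linear automorphism. -/
noncomputable def reflV (α : Module.Dual ℝ V) (h : α (D.coroot α) = 2) : V ≃ₗ[ℝ] V where
  toFun := fun v => v - α v • D.coroot α
  map_add' := by intro x y; simp only [map_add, add_smul]; abel
  map_smul' := by intro r x; simp only [map_smul, smul_eq_mul, RingHom.id_apply, smul_sub,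
    smul_smul]
  invFun := fun v => v - α v • D.coroot α
  left_inv := by
    intro v
    simp only [map_sub, map_smul, smul_eq_mul, h]
    have : α v - α v * 2 = -(α v) := by ring
    rw [this, neg_smul, sub_neg_eq_add, sub_add_cancel]
  right_inv := by
    intro v
    simp only [map_sub, map_smul, smul_eq_mul, h]
    have : α v - α v * 2 = -(α v) := by ring
    rw [this, neg_smul, sub_neg_eq_add, sub_add_cancel]

/-- The reflection attached to a root. -/
noncomputable def sRef (α : Module.Dual ℝ V) (h : α ∈ D.roots) : V ≃ₗ[ℝ] V :=
  D.reflV α (D.coroot_self α h)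

/-- The Weyl group, as the subgroup of `GL(V)` generated by the reflections in the roots. -/
noncomputable def weylGroup : Subgroup (V ≃ₗ[ℝ] V) :=
  Subgroup.closure {e | ∃ α, ∃ h : α ∈ D.roots, e = D.sRef α h}

open scoped Classical in
/-- The length of a Weyl group element: the number of positive roots made negative. -/
noncomputable def lenW (w : V ≃ₗ[ℝ] V) : ℕ :=
  (D.pos.filter fun β => dualAct w β ∉ D.pos).card

/-- The Bruhat order, via the standard characterization: the reflexive-transitive
closure of the relation `x < t x` whenever `t` is a reflection and `ℓ(x) < ℓ(t x)`. -/
def bruhatLE (x y : V ≃ₗ[ℝ] V) : Prop :=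
  Relation.ReflTransGen
    (fun u v => D.lenW u < D.lenW v ∧ ∃ α, ∃ h : α ∈ D.roots, v = D.sRef α h * u) x y

/-- Strict Bruhat order. -/
def bruhatLT (x y : V ≃ₗ[ℝ] V) : Prop := D.bruhatLE x y ∧ x ≠ y

/-- A simple (positive) root: a positive root which is not the sum of two positive roots. -/
def IsSimpleRoot (α : Module.Dual ℝ V) : Prop :=
  α ∈ D.pos ∧ ¬ ∃ β ∈ D.pos, ∃ γ ∈ D.pos, α = β + γ

/-- The set `Δ_w = {α ∈ Δ : w(α) > 0}`. -/
def DeltaW (w : V ≃ₗ[ℝ] V) : Set (Module.Dual ℝ V) :=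
  {α | D.IsSimpleRoot α ∧ dualAct w α ∈ D.pos}

/-- The parabolic subgroup `W_Θ` generated by the reflections in the roots belonging
to `Θ`. -/
noncomputable def parabolic (Θ : Set (Module.Dual ℝ V)) : Subgroup (V ≃ₗ[ℝ] V) :=
  Subgroup.closure {e | ∃ α, ∃ h : α ∈ D.roots, α ∈ Θ ∧ e = D.sRef α h}

/-- A dominant coweight. -/
def IsDominant (v : V) : Prop := ∀ β ∈ D.pos, 0 ≤ β v

end RootSystemData

/-!
For `x` in the Weyl group, `ℓ(w_Δ x) = |Φ⁺| - ℓ(x)`, since `w_Δ` makes every positive root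
negative. Conjugation gives `w⁻¹ s_α w = s_β` with `β = w⁻¹(α)` (on the roots this is forced by
the uniqueness of a reflection preserving a finite set), which yields the first equality. Since a
simple reflection permutes `Φ⁺ ∖ {α}` and `β > 0`, `ℓ(w⁻¹ s_α) = ℓ(s_α w) = ℓ(w) + 1`, which is
the second one. If `β = γ + δ` is not simple, `s_β` makes `β` and one of `γ`, `δ` negative, so
`ℓ(s_β) ≥ 2` and the inequality is strict.

That `s_α` permutes `Φ⁺ ∖ {α}` rests on the rank-two bound `0 < ⟨γ, β^∨⟩⟨β, γ^∨⟩ < 4` for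
non-proportional roots: `s_β s_γ` permutes the finite set of roots, so a power of it fixes `β`,
while its powers are given by Chebyshev polynomials in `t = ⟨γ, β^∨⟩⟨β, γ^∨⟩ - 2`, which have no
zeros on `|t| ≥ 2`.
-/

open Module Set

open Polynomial Polynomial.Chebyshev in
lemma Polynomial.Chebyshev.natCast_add_one_le_abs_eval_S {t : ℝ} (ht : 2 ≤ |t|) (n : ℕ) :
    (n : ℝ) + 1 ≤ |(S ℝ n).eval t| := by
  suffices ∀ n : ℕ, (n : ℝ) + 1 ≤ |(S ℝ n).eval t| ∧
      |(S ℝ n).eval t| + 1 ≤ |(S ℝ (n + 1 : ℕ)).eval t| from (this n).1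
  intro n
  induction n with
  | zero =>
    simp only [CharP.cast_eq_zero, zero_add, S_zero, eval_one, abs_one, Nat.cast_one, S_one, eval_X]
    exact ⟨le_rfl, by linarith⟩
  | succ n ih =>
    refine ⟨by push_cast at ih ⊢; linarith [ih.1, ih.2], ?_⟩
    have hrec : (S ℝ (n + 2 : ℕ)).eval t = t * (S ℝ (n + 1 : ℕ)).eval t - (S ℝ n).eval t := by
      push_cast; simp [S_add_two]
    have := abs_sub_abs_le_abs_sub (t * (S ℝ (n + 1 : ℕ)).eval t) ((S ℝ n).eval t)
    rw [abs_mul, ← hrec] at this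
    nlinarith [abs_nonneg ((S ℝ (n + 1 : ℕ)).eval t)]

lemma LinearEquiv.exists_pow_apply_eq_self_of_mapsTo {R M : Type*} [Semiring R] [AddCommMonoid M]
    [Module R M] {Φ : Set M} (hΦ : Φ.Finite) {u : M ≃ₗ[R] M} (hu : MapsTo u Φ Φ) {x : M}
    (hx : x ∈ Φ) : ∃ n, 0 < n ∧ (u ^ n) x = x := by
  have : Finite Φ := hΦ.to_subtype
  obtain ⟨n, hn, hper⟩ := Function.mem_periodicPts.1
    ((hu.restrict_inj.2 u.injective.injOn).mem_periodicPts ⟨x, hx⟩)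
  refine ⟨n, hn, ?_⟩
  have := congrArg Subtype.val hper.eq
  rwa [MapsTo.coe_iterate_restrict, ← LinearEquiv.coe_pow] at this

open Polynomial.Chebyshev in
lemma Module.apply_mul_apply_mem_Ioo_of_mapsTo_reflection {M : Type*} [AddCommGroup M]
    [Module ℝ M] {Φ : Set M} (hΦ : Φ.Finite) {x y : M} {f g : Dual ℝ M} (hf : f x = 2)
    (hg : g y = 2) (hxy : LinearIndependent ℝ ![x, y]) (hx : x ∈ Φ)
    (hfΦ : MapsTo (reflection hf) Φ Φ) (hgΦ : MapsTo (reflection hg) Φ Φ) (hgx : g x ≠ 0) :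
    f y * g x ∈ Ioo 0 4 := by
  obtain ⟨n, hn, hper⟩ := LinearEquiv.exists_pow_apply_eq_self_of_mapsTo hΦ
    (u := reflection hf * reflection hg) (hfΦ.comp hgΦ) hx
  obtain ⟨k, rfl⟩ : ∃ k, n = k + 1 := ⟨n - 1, by omega⟩
  rw [reflection_mul_reflection_pow_apply_self hf hg] at hper
  push_cast at hper
  rw [add_sub_cancel_right] at hper
  set t := f y * g x - 2
  have hS : (S ℝ k).eval t = 0 := by
    have hzero := LinearIndependent.pair_iff.1 hxy _ _
      (by rw [sub_smul, one_smul, sub_add_eq_add_sub, hper, sub_self] :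
        ((S ℝ (k + 1)).eval t + (S ℝ k).eval t - 1) • x + ((S ℝ k).eval t * -g x) • y = 0)
    simpa [hgx] using hzero.2
  have ht : |t| < 2 := by
    by_contra! ht
    have := natCast_add_one_le_abs_eval_S ht k
    rw [hS, abs_zero] at this
    linarith [(k.cast_nonneg : (0:ℝ) ≤ k)]
  rw [abs_lt] at ht
  constructor <;> linarith [ht.1, ht.2]

lemma dualAct_mul (u v : V ≃ₗ[ℝ] V) (β : Dual ℝ V) :
    dualAct (u * v) β = dualAct u (dualAct v β) := rfl

lemma dualAct_inv_dualAct (w : V ≃ₗ[ℝ] V) (β : Dual ℝ V) : dualAct w⁻¹ (dualAct w β) = β := by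
  rw [← dualAct_mul, inv_mul_cancel]; rfl

lemma dualAct_dualAct_inv (w : V ≃ₗ[ℝ] V) (β : Dual ℝ V) : dualAct w (dualAct w⁻¹ β) = β := by
  rw [← dualAct_mul, mul_inv_cancel]; rfl

lemma dualAct_neg (w : V ≃ₗ[ℝ] V) (β : Dual ℝ V) : dualAct w (-β) = -dualAct w β := rfl

lemma dualAct_add (w : V ≃ₗ[ℝ] V) (β γ : Dual ℝ V) :
    dualAct w (β + γ) = dualAct w β + dualAct w γ := rfl

lemma dualAct_sub (w : V ≃ₗ[ℝ] V) (β γ : Dual ℝ V) :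
    dualAct w (β - γ) = dualAct w β - dualAct w γ := rfl

lemma dualAct_smul (w : V ≃ₗ[ℝ] V) (a : ℝ) (β : Dual ℝ V) :
    dualAct w (a • β) = a • dualAct w β := rfl

namespace RootSystemData

variable (D : RootSystemData V)

lemma neg_mem_roots {γ : Dual ℝ V} (hγ : γ ∈ D.roots) : -γ ∈ D.roots := by
  simpa [D.coroot_self γ hγ, two_smul] using D.reflection_mem γ hγ γ hγ

lemma neg_mem_pos_of_notMem_pos {γ : Dual ℝ V} (hγ : γ ∈ D.roots) (h : γ ∉ D.pos) :
    -γ ∈ D.pos :=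
  (D.pos_or_neg γ hγ).resolve_left h

lemma dualAct_sRef (α : Dual ℝ V) (hα : α ∈ D.roots) (γ : Dual ℝ V) :
    dualAct (D.sRef α hα) γ = γ - γ (D.coroot α) • α := by
  ext x
  simp [dualAct, sRef, reflV, mul_comm]

lemma dualAct_sRef_self (α : Dual ℝ V) (hα : α ∈ D.roots) : dualAct (D.sRef α hα) α = -α := by
  rw [dualAct_sRef, D.coroot_self α hα, two_smul, sub_add_cancel_left]

lemma sRef_mul_self (α : Dual ℝ V) (hα : α ∈ D.roots) : D.sRef α hα * D.sRef α hα = 1 := by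
  ext v
  change D.sRef α hα (D.sRef α hα v) = v
  simp only [sRef, reflV, LinearEquiv.coe_mk, LinearMap.coe_mk, AddHom.coe_mk, map_sub, map_smul,
    D.coroot_self α hα]
  module

lemma sRef_inv (α : Dual ℝ V) (hα : α ∈ D.roots) : (D.sRef α hα)⁻¹ = D.sRef α hα :=
  inv_eq_of_mul_eq_one_left (D.sRef_mul_self α hα)

lemma sRef_mem_weylGroup (α : Dual ℝ V) (hα : α ∈ D.roots) : D.sRef α hα ∈ D.weylGroup :=
  Subgroup.subset_closure ⟨α, hα, rfl⟩

lemma dualAct_mem_roots {e : V ≃ₗ[ℝ] V} (he : e ∈ D.weylGroup) {γ : Dual ℝ V}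
    (hγ : γ ∈ D.roots) : dualAct e γ ∈ D.roots := by
  induction he using Subgroup.closure_induction'' generalizing γ with
  | mem _ hx =>
    obtain ⟨α, hα, rfl⟩ := hx
    simpa only [dualAct_sRef] using D.reflection_mem α hα γ hγ
  | inv_mem _ hx =>
    obtain ⟨α, hα, rfl⟩ := hx
    simpa only [sRef_inv, dualAct_sRef] using D.reflection_mem α hα γ hγ
  | one => exact hγ
  | mul _ _ _ _ hx hy => exact hx (hy hγ)

lemma smul_ne_of_ne_of_ne_neg {β γ : Dual ℝ V} (hβ : β ∈ D.roots) (hγ : γ ∈ D.roots)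
    (h₁ : γ ≠ β) (h₂ : γ ≠ -β) (a : ℝ) : a • β ≠ γ := by
  rintro rfl
  rcases D.reduced β hβ a hγ with rfl | rfl
  · exact h₁ (one_smul ℝ β)
  · exact h₂ (neg_one_smul ℝ β)

lemma linearIndependent_pair {β γ : Dual ℝ V} (hβ : β ∈ D.roots) (hγ : γ ∈ D.roots)
    (h₁ : γ ≠ β) (h₂ : γ ≠ -β) : LinearIndependent ℝ ![β, γ] :=
  (LinearIndependent.pair_iff' (D.root_ne_zero β hβ)).2 (D.smul_ne_of_ne_of_ne_neg hβ hγ h₁ h₂)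

lemma eval_coroot_self {β : Dual ℝ V} (hβ : β ∈ D.roots) : Dual.eval ℝ V (D.coroot β) β = 2 :=
  D.coroot_self β hβ

lemma mapsTo_reflection_coroot {β : Dual ℝ V} (hβ : β ∈ D.roots) :
    MapsTo (reflection (D.eval_coroot_self hβ))
      (D.roots : Set (Dual ℝ V)) D.roots :=
  fun γ hγ => by
    rw [Finset.mem_coe, reflection_apply, Dual.eval_apply]
    exact D.reflection_mem β hβ γ hγ

lemma pairing_mul_pairing_mem_Ioo {β γ : Dual ℝ V} (hβ : β ∈ D.roots) (hγ : γ ∈ D.roots)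
    (h₁ : γ ≠ β) (h₂ : γ ≠ -β) (h : β (D.coroot γ) ≠ 0) :
    γ (D.coroot β) * β (D.coroot γ) ∈ Ioo 0 4 :=
  apply_mul_apply_mem_Ioo_of_mapsTo_reflection D.roots.finite_toSet _ _
    (D.linearIndependent_pair hβ hγ h₁ h₂) hβ (D.mapsTo_reflection_coroot hβ)
    (D.mapsTo_reflection_coroot hγ) h

lemma pairing_eq_zero_or_mul_mem_Icc {β γ : Dual ℝ V} (hβ : β ∈ D.roots) (hγ : γ ∈ D.roots)
    (h₁ : γ ≠ β) (h₂ : γ ≠ -β) {n m : ℤ} (hn : γ (D.coroot β) = n) (hm : β (D.coroot γ) = m) :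
    (n = 0 ∧ m = 0) ∨ n * m ∈ Icc 1 3 := by
  by_cases hm0 : m = 0
  · refine .inl ⟨?_, hm0⟩
    by_contra hn0
    have := D.pairing_mul_pairing_mem_Ioo hγ hβ h₁.symm (fun h => h₂ (by rw [h, neg_neg]))
      (by rwa [hn, Int.cast_ne_zero])
    simp [hn, hm, hm0] at this
  · have := D.pairing_mul_pairing_mem_Ioo hβ hγ h₁ h₂ (by rwa [hm, Int.cast_ne_zero])
    rw [hn, hm, mem_Ioo] at this
    have h0 : 0 < n * m := by exact_mod_cast this.1
    have h4 : n * m < 4 := by exact_mod_cast this.2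
    exact .inr ⟨by omega, by omega⟩

lemma sub_mem_roots_of_pairing_pos {β γ : Dual ℝ V} (hβ : β ∈ D.roots) (hγ : γ ∈ D.roots)
    (h₁ : γ ≠ β) (h₂ : γ ≠ -β) (h : 0 < γ (D.coroot β)) : γ - β ∈ D.roots := by
  obtain ⟨n, hn⟩ := D.crystallographic β hβ γ hγ
  obtain ⟨m, hm⟩ := D.crystallographic γ hγ β hβ
  have hn1 : 0 < n := by exact_mod_cast hn ▸ h
  have : n = 1 ∨ m = 1 := by
    rcases D.pairing_eq_zero_or_mul_mem_Icc hβ hγ h₁ h₂ hn hm with ⟨rfl, -⟩ | ⟨h1, h3⟩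
    · omega
    · by_contra! hne
      have : 1 ≤ m := by nlinarith
      have : 2 ≤ n := by omega
      have : 2 ≤ m := by omega
      nlinarith
  rcases this with rfl | rfl
  · simpa [hn] using D.reflection_mem β hβ γ hγ
  · simpa [hm] using D.neg_mem_roots (D.reflection_mem γ hγ β hβ)

lemma abs_pairing_le_three {β γ : Dual ℝ V} (hβ : β ∈ D.roots) (hγ : γ ∈ D.roots)
    (h₁ : γ ≠ β) (h₂ : γ ≠ -β) {n : ℤ} (hn : γ (D.coroot β) = n) : |n| ≤ 3 := by
  obtain ⟨m, hm⟩ := D.crystallographic γ hγ β hβ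
  rcases D.pairing_eq_zero_or_mul_mem_Icc hβ hγ h₁ h₂ hn hm with ⟨rfl, -⟩ | ⟨h1, h3⟩
  · simp
  · have hm0 : m ≠ 0 := by rintro rfl; simp at h1
    calc |n| ≤ |n| * |m| := le_mul_of_one_le_right (abs_nonneg n) (Int.one_le_abs hm0)
      _ = |n * m| := (abs_mul n m).symm
      _ ≤ 3 := abs_le.2 ⟨by omega, h3⟩

lemma sub_mem_pos_of_isSimpleRoot {α γ : Dual ℝ V} (hα : α ∈ D.roots) (hs : D.IsSimpleRoot α)
    (hγ : γ ∈ D.pos) (hne : γ ≠ α) (h : 0 < γ (D.coroot α)) : γ - α ∈ D.pos := by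
  have hneg : γ ≠ -α := fun h' => D.pos_not_neg α hs.1 (h' ▸ hγ)
  by_contra hnot
  have := D.neg_mem_pos_of_notMem_pos
    (D.sub_mem_roots_of_pairing_pos hα (D.pos_subset hγ) hne hneg h) hnot
  exact hs.2 ⟨-(γ - α), this, γ, hγ, by abel⟩

lemma add_mem_pos_of_pairing_neg {α γ : Dual ℝ V} (hα : α ∈ D.pos) (hγ : γ ∈ D.pos)
    (h : γ (D.coroot α) < 0) : γ + α ∈ D.pos := by
  have hαr := D.pos_subset hα
  have h₁ : -γ ≠ α := fun h' => D.pos_not_neg γ hγ (h' ▸ hα)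
  have h₂ : -γ ≠ -α := by
    rw [ne_eq, neg_inj]
    rintro rfl
    linarith [D.coroot_self γ hαr]
  have := D.sub_mem_roots_of_pairing_pos hαr (D.neg_mem_roots (D.pos_subset hγ)) h₁ h₂
    (by simpa using h)
  refine D.pos_add γ hγ α hα ?_
  simpa [add_comm] using D.neg_mem_roots this

lemma add_ne_intCast_smul_of_isSimpleRoot {α x y : Dual ℝ V} (hα : α ∈ D.roots)
    (hs : D.IsSimpleRoot α) (hx : x ∈ D.pos) (hy : y ∈ D.pos) {c : ℤ} (hc : |c| ≤ 1) :
    x + y ≠ (c : ℝ) • α := by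
  intro hxy
  obtain ⟨hc₁, hc₂⟩ := abs_le.1 hc
  interval_cases c
  · have hneg : x + y = -α := by rw [hxy, Int.cast_neg, Int.cast_one]; exact neg_one_smul ℝ α
    have := D.pos_add x hx y hy (hneg ▸ D.neg_mem_roots hα)
    exact D.pos_not_neg α hs.1 (hneg ▸ this)
  · have : y = -x := by simpa [add_eq_zero_iff_eq_neg'] using hxy
    exact D.pos_not_neg x hx (this ▸ hy)
  · exact hs.2 ⟨x, hx, y, hy, by simpa using hxy.symm⟩

lemma dualAct_sRef_mem_pos {α γ : Dual ℝ V} (hα : α ∈ D.roots) (hs : D.IsSimpleRoot α)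
    (hγ : γ ∈ D.pos) (hne : γ ≠ α) : dualAct (D.sRef α hα) γ ∈ D.pos := by
  have hγr := D.pos_subset hγ
  have hneg : γ ≠ -α := fun h => D.pos_not_neg α hs.1 (h ▸ hγ)
  obtain ⟨k, hk⟩ := D.crystallographic α hα γ hγr
  rw [D.dualAct_sRef, hk]
  by_contra hnot
  -- Shifting the positive roots `γ` and `δ = kα - γ` by `∓α` gives two positive roots with sum
  -- `(k ∓ 2)α`, and `|k ∓ 2| ≤ 1`.
  set δ := (k : ℝ) • α - γ with hδ
  have hδpos : δ ∈ D.pos := by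
    simpa using D.neg_mem_pos_of_notMem_pos (hk ▸ D.reflection_mem α hα γ hγr) hnot
  have hδk : δ (D.coroot α) = k := by
    simp only [hδ, LinearMap.sub_apply, LinearMap.smul_apply, smul_eq_mul, hk, D.coroot_self α hα]
    ring
  obtain ⟨hk₁, hk₂⟩ := abs_le.1 (D.abs_pairing_le_three hα hγr hne hneg hk)
  rcases lt_trichotomy k 0 with hk0 | rfl | hk0
  · have hk0' : (k : ℝ) < 0 := by exact_mod_cast hk0
    refine D.add_ne_intCast_smul_of_isSimpleRoot hα hs
      (D.add_mem_pos_of_pairing_neg hs.1 hγ (hk ▸ hk0'))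
      (D.add_mem_pos_of_pairing_neg hs.1 hδpos (hδk ▸ hk0')) (c := k + 2)
      (abs_le.2 ⟨by omega, by omega⟩) ?_
    rw [hδ]; push_cast; module
  · exact D.pos_not_neg γ hγ (by simpa [hδ] using hδpos)
  · have hk0' : (0 : ℝ) < k := by exact_mod_cast hk0
    have hδne : δ ≠ α := fun h => D.smul_ne_of_ne_of_ne_neg hα hγr hne hneg (k - 1)
      (by rw [hδ] at h; linear_combination (norm := module) h)
    refine D.add_ne_intCast_smul_of_isSimpleRoot hα hs
      (D.sub_mem_pos_of_isSimpleRoot hα hs hγ hne (hk ▸ hk0'))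
      (D.sub_mem_pos_of_isSimpleRoot hα hs hδpos hδne (hδk ▸ hk0')) (c := k - 2)
      (abs_le.2 ⟨by omega, by omega⟩) ?_
    rw [hδ]; push_cast; module

lemma apply_eq_apply_coroot {β : Dual ℝ V} (hβ : β ∈ D.roots) {c : V} (hc : β c = 2)
    (hmaps : ∀ γ ∈ D.roots, γ - γ c • β ∈ D.roots) {γ : Dual ℝ V} (hγ : γ ∈ D.roots) :
    γ c = γ (D.coroot β) := by
  have := Dual.eq_of_preReflection_mapsTo' D.roots.finite_toSet (Submodule.subset_span hβ)
    (f := Dual.eval ℝ V c) hc (fun γ hγ => by simpa [preReflection_apply] using hmaps γ hγ)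
    (D.eval_coroot_self hβ) (D.mapsTo_reflection_coroot hβ)
  exact LinearMap.congr_fun this ⟨γ, Submodule.subset_span hγ⟩

lemma dualAct_conj_sRef {w : V ≃ₗ[ℝ] V} (hw : w ∈ D.weylGroup) {α : Dual ℝ V}
    (hα : α ∈ D.roots) (hβ : dualAct w⁻¹ α ∈ D.roots) {γ : Dual ℝ V} (hγ : γ ∈ D.roots) :
    dualAct (w⁻¹ * D.sRef α hα * w) γ = dualAct (D.sRef (dualAct w⁻¹ α) hβ) γ := by
  have hconj : ∀ γ, dualAct (w⁻¹ * D.sRef α hα * w) γ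
      = γ - γ (w.symm (D.coroot α)) • dualAct w⁻¹ α := fun γ => by
    rw [dualAct_mul, dualAct_mul, D.dualAct_sRef, dualAct_sub, dualAct_smul, dualAct_inv_dualAct]
    rfl
  have hc : dualAct w⁻¹ α (w.symm (D.coroot α)) = 2 := by
    change α (w.symm.symm (w.symm (D.coroot α))) = 2
    rw [LinearEquiv.symm_symm, LinearEquiv.apply_symm_apply, D.coroot_self α hα]
  have hmaps : ∀ γ ∈ D.roots, γ - γ (w.symm (D.coroot α)) • dualAct w⁻¹ α ∈ D.roots :=
    fun γ hγ => hconj γ ▸ D.dualAct_mem_roots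
      (mul_mem (mul_mem (inv_mem hw) (D.sRef_mem_weylGroup α hα)) hw) hγ
  rw [hconj, D.dualAct_sRef, D.apply_eq_apply_coroot hβ hc hmaps hγ]

section Length

open scoped Classical

lemma lenW_le_card (e : V ≃ₗ[ℝ] V) : D.lenW e ≤ D.pos.card :=
  Finset.card_filter_le _ _

lemma lenW_congr {x y : V ≃ₗ[ℝ] V} (h : ∀ β ∈ D.pos, dualAct x β = dualAct y β) :
    D.lenW x = D.lenW y := by
  unfold lenW
  rw [Finset.filter_congr fun β hβ => by rw [h β hβ]]

lemma lenW_eq_card_of_forall_notMem_pos {wD : V ≃ₗ[ℝ] V}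
    (hwD : ∀ β ∈ D.pos, dualAct wD β ∉ D.pos) : D.lenW wD = D.pos.card := by
  rw [lenW, Finset.filter_true_of_mem hwD]

lemma lenW_longest_mul {wD x : V ≃ₗ[ℝ] V} (hwD : wD ∈ D.weylGroup)
    (hwDlong : ∀ β ∈ D.pos, dualAct wD β ∉ D.pos) (hx : x ∈ D.weylGroup) :
    D.lenW (wD * x) = D.pos.card - D.lenW x := by
  have key : ∀ β ∈ D.pos, dualAct (wD * x) β ∉ D.pos ↔ dualAct x β ∈ D.pos := by
    refine fun β hβ => ⟨fun h => ?_, hwDlong _⟩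
    by_contra hxβ
    have hxβr := D.dualAct_mem_roots hx (D.pos_subset hβ)
    have := hwDlong _ (D.neg_mem_pos_of_notMem_pos hxβr hxβ)
    rw [dualAct_neg] at this
    exact h ((D.pos_or_neg _ (D.dualAct_mem_roots hwD hxβr)).resolve_right this)
  unfold lenW
  rw [Finset.filter_congr key]
  have := Finset.card_filter_add_card_filter_not (s := D.pos)
    (fun β => dualAct x β ∈ D.pos)
  omega

lemma lenW_inv {e : V ≃ₗ[ℝ] V} (he : e ∈ D.weylGroup) : D.lenW e⁻¹ = D.lenW e := by
  unfold lenW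
  refine Finset.card_bij' (fun β _ => -dualAct e⁻¹ β) (fun β _ => -dualAct e β) ?_ ?_ ?_ ?_
  · intro β hβ
    rw [Finset.mem_filter] at hβ ⊢
    refine ⟨D.neg_mem_pos_of_notMem_pos (D.dualAct_mem_roots (inv_mem he) (D.pos_subset hβ.1))
      hβ.2, ?_⟩
    rw [dualAct_neg, dualAct_dualAct_inv]
    exact D.pos_not_neg β hβ.1
  · intro β hβ
    rw [Finset.mem_filter] at hβ ⊢
    refine ⟨D.neg_mem_pos_of_notMem_pos (D.dualAct_mem_roots he (D.pos_subset hβ.1)) hβ.2, ?_⟩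
    rw [dualAct_neg, dualAct_inv_dualAct]
    exact D.pos_not_neg β hβ.1
  · intro β _
    rw [dualAct_neg, dualAct_dualAct_inv, neg_neg]
  · intro β _
    rw [dualAct_neg, dualAct_inv_dualAct, neg_neg]

lemma lenW_sRef_mul {α : Dual ℝ V} (hα : α ∈ D.roots) (hs : D.IsSimpleRoot α)
    {w : V ≃ₗ[ℝ] V} (hw : w ∈ D.weylGroup) (hpos : dualAct w⁻¹ α ∈ D.pos) :
    D.lenW (D.sRef α hα * w) = D.lenW w + 1 := by
  set β₀ := dualAct w⁻¹ α
  have hwβ₀ : dualAct w β₀ = α := dualAct_dualAct_inv w α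
  have key : ∀ β ∈ D.pos,
      dualAct (D.sRef α hα * w) β ∉ D.pos ↔ β = β₀ ∨ dualAct w β ∉ D.pos := by
    intro β hβ
    rw [dualAct_mul]
    by_cases hβ₀ : β = β₀
    · rw [hβ₀, hwβ₀, D.dualAct_sRef_self]
      exact iff_of_true (D.pos_not_neg α hs.1) (Or.inl rfl)
    have hne : dualAct w β ≠ α := fun h => hβ₀ <|
      calc β = dualAct w⁻¹ (dualAct w β) := (dualAct_inv_dualAct w β).symm
        _ = β₀ := by rw [h]
    by_cases hwβ : dualAct w β ∈ D.pos
    · exact iff_of_false (not_not.2 (D.dualAct_sRef_mem_pos hα hs hwβ hne)) (by tauto)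
    · have hneg := D.neg_mem_pos_of_notMem_pos (D.dualAct_mem_roots hw (D.pos_subset hβ)) hwβ
      have hne' : -dualAct w β ≠ α := fun h => by
        have : β₀ = -β := by
          change dualAct w⁻¹ α = -β
          rw [← h, dualAct_neg, dualAct_inv_dualAct]
        exact D.pos_not_neg β hβ (this ▸ hpos)
      refine iff_of_true (fun h => D.pos_not_neg _ h ?_) (Or.inr hwβ)
      simpa [dualAct_neg] using D.dualAct_sRef_mem_pos hα hs hneg hne'
  have hβ₀ : β₀ ∉ D.pos.filter fun β => dualAct w β ∉ D.pos := by simp [hwβ₀, hs.1]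
  have hfilter : D.pos.filter (fun β => dualAct (D.sRef α hα * w) β ∉ D.pos)
      = insert β₀ (D.pos.filter fun β => dualAct w β ∉ D.pos) := by
    ext β
    simp only [Finset.mem_filter, Finset.mem_insert]
    constructor
    · rintro ⟨hβ, h⟩
      exact ((key β hβ).1 h).imp id (⟨hβ, ·⟩)
    · rintro (rfl | ⟨hβ, h⟩)
      · exact ⟨hpos, (key _ hpos).2 (Or.inl rfl)⟩
      · exact ⟨hβ, (key β hβ).2 (Or.inr h)⟩
  unfold lenW
  rw [hfilter, Finset.card_insert_of_notMem hβ₀]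

lemma two_le_lenW_sRef {β : Dual ℝ V} (hβ : β ∈ D.pos) (hns : ¬ D.IsSimpleRoot β) :
    2 ≤ D.lenW (D.sRef β (D.pos_subset hβ)) := by
  obtain ⟨γ, hγ, δ, hδ, rfl⟩ : ∃ γ ∈ D.pos, ∃ δ ∈ D.pos, β = γ + δ := by
    by_contra h
    exact hns ⟨hβ, h⟩
  set s := D.sRef (γ + δ) (D.pos_subset hβ)
  have hflip : dualAct s γ ∉ D.pos ∨ dualAct s δ ∉ D.pos := by
    by_contra! h
    have hsum : dualAct s γ + dualAct s δ = -(γ + δ) := by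
      rw [← dualAct_add, D.dualAct_sRef_self]
    have := D.pos_add _ h.1 _ h.2 (hsum ▸ D.neg_mem_roots (D.pos_subset hβ))
    exact D.pos_not_neg _ hβ (hsum ▸ this)
  suffices ∃ x ∈ D.pos, x ≠ γ + δ ∧ dualAct s x ∉ D.pos by
    obtain ⟨x, hx, hne, hsx⟩ := this
    have hsub : {γ + δ, x} ⊆ D.pos.filter fun y => dualAct s y ∉ D.pos := by
      intro y hy
      rcases Finset.mem_insert.1 hy with rfl | hy
      · exact Finset.mem_filter.2 ⟨hβ, by rw [D.dualAct_sRef_self]; exact D.pos_not_neg _ hβ⟩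
      · rw [Finset.mem_singleton.1 hy]
        exact Finset.mem_filter.2 ⟨hx, hsx⟩
    calc 2 = ({γ + δ, x} : Finset (Dual ℝ V)).card := (Finset.card_pair hne.symm).symm
      _ ≤ _ := Finset.card_le_card hsub
  rcases hflip with h | h
  · exact ⟨γ, hγ, fun h' => D.root_ne_zero δ (D.pos_subset hδ) (by simpa using h'), h⟩
  · exact ⟨δ, hδ, fun h' => D.root_ne_zero γ (D.pos_subset hγ) (by simpa using h'), h⟩

end Length

end RootSystemData

theorem length_defect_general (D : RootSystemData V)
    (wD : V ≃ₗ[ℝ] V) (hwD : wD ∈ D.weylGroup)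
    (hwDlong : ∀ β ∈ D.pos, dualAct wD β ∉ D.pos)
    (w : V ≃ₗ[ℝ] V) (hw : w ∈ D.weylGroup)
    (α : Module.Dual ℝ V) (hα : α ∈ D.roots) (hαs : D.IsSimpleRoot α)
    (hpos : dualAct w⁻¹ α ∈ D.pos) (hns : ¬ D.IsSimpleRoot (dualAct w⁻¹ α)) :
    D.lenW (wD * w⁻¹ * D.sRef α hα * w) =
        D.lenW wD - D.lenW (D.sRef (dualAct w⁻¹ α) (D.pos_subset hpos)) ∧
      D.lenW (wD * w⁻¹ * D.sRef α hα) + D.lenW w = D.lenW wD - 1 ∧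
      D.lenW (wD * w⁻¹ * D.sRef α hα * w) <
        D.lenW (wD * w⁻¹ * D.sRef α hα) + D.lenW w := by
  have hs := D.sRef_mem_weylGroup α hα
  have h_conj : D.lenW (w⁻¹ * D.sRef α hα * w) = D.lenW (D.sRef _ (D.pos_subset hpos)) :=
    D.lenW_congr fun β hβ => D.dualAct_conj_sRef hw hα _ (D.pos_subset hβ)
  have h_succ : D.lenW (w⁻¹ * D.sRef α hα) = D.lenW w + 1 := by
    rw [← D.lenW_inv (mul_mem (inv_mem hw) hs), mul_inv_rev, inv_inv, D.sRef_inv,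
      D.lenW_sRef_mul hα hαs hw hpos]
  have h₁ : D.lenW (wD * w⁻¹ * D.sRef α hα * w) =
      D.pos.card - D.lenW (w⁻¹ * D.sRef α hα * w) := by
    rw [← D.lenW_longest_mul hwD hwDlong (mul_mem (mul_mem (inv_mem hw) hs) hw)]
    simp only [mul_assoc]
  have h₂ : D.lenW (wD * w⁻¹ * D.sRef α hα) = D.pos.card - D.lenW (w⁻¹ * D.sRef α hα) := by
    rw [← D.lenW_longest_mul hwD hwDlong (mul_mem (inv_mem hw) hs), mul_assoc]
  have h_two := D.two_le_lenW_sRef hpos hns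
  have h_le := D.lenW_le_card (D.sRef _ (D.pos_subset hpos))
  have h_le' := D.lenW_le_card (w⁻¹ * D.sRef α hα)
  rw [h_succ] at h_le'
  rw [h₁, h₂, h_conj, h_succ, D.lenW_eq_card_of_forall_notMem_pos hwDlong]
  omega

/-- If `s_α w > w` and the positive root `w⁻¹(α)` is not simple,
then `ℓ(w_Δ w⁻¹ s_α w) = ℓ(w_Δ) − ℓ(s_{w⁻¹(α)})`, `ℓ(w_Δ w⁻¹ s_α) + ℓ(w) = ℓ(w_Δ) − 1`
and in particular `ℓ(w_Δ w⁻¹ s_α w) < ℓ(w_Δ w⁻¹ s_α) + ℓ(w)`. -/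
theorem length_defect (D : RootSystemData V)
    (wD : V ≃ₗ[ℝ] V) (hwD : wD ∈ D.weylGroup)
    (hwDlong : ∀ β ∈ D.pos, dualAct wD β ∉ D.pos)
    (w : V ≃ₗ[ℝ] V) (hw : w ∈ D.weylGroup)
    (α : Module.Dual ℝ V) (hα : α ∈ D.roots) (hαs : D.IsSimpleRoot α)
    (hlt : D.bruhatLT w (D.sRef α hα * w))
    (hpos : dualAct w⁻¹ α ∈ D.pos) (hns : ¬ D.IsSimpleRoot (dualAct w⁻¹ α)) :
    D.lenW (wD * w⁻¹ * D.sRef α hα * w) =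
        D.lenW wD - D.lenW (D.sRef (dualAct w⁻¹ α) (D.pos_subset hpos)) ∧
      D.lenW (wD * w⁻¹ * D.sRef α hα) + D.lenW w = D.lenW wD - 1 ∧
      D.lenW (wD * w⁻¹ * D.sRef α hα * w) <
        D.lenW (wD * w⁻¹ * D.sRef α hα) + D.lenW w :=
  length_defect_general D wD hwD hwDlong w hw α hα hαs hpos hns
end

section
/- Let Λ be a group with homomorphism ν: Λ → V as above, Λ⁺ = {λ : ν(λ) dominant}, and C[Λ⁺] the monoid algebra of Λ⁺ over a field C. The C-linear map χ: 𝒜 → C[Λ⁺] sending E(λ) to τ_λ if λ ∈ Λ⁺ and to 0 otherwise is an algebra homomorphism, where 𝒜 is the algebra with multiplication E(λ₁)E(λ₂) = E(λ₁λ₂) if ν(λ₁), ν(λ₂) lie in a common closed chamber and 0 otherwise. -/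
open Module

variable {V : Type} [AddCommGroup V] [Module ℝ V]

/-- `v` and `w` lie in a common closed Weyl chamber: no root hyperplane strictly
separates them. -/
def RootSystemData.SameClosedChamber (D : RootSystemData V) (v w : V) : Prop :=
  ∀ β ∈ D.roots, 0 < β v → 0 ≤ β w

/-!
A positive root that is negative on one of two coweights in a common closed chamber is
nonpositive on the other, hence negative on their sum. So, for `ν(λ₁)` and `ν(λ₂)` in a common
closed chamber, `ν(λ₁λ₂) = ν(λ₁) + ν(λ₂)` is dominant exactly when both summands are; and two
dominant coweights always lie in a common closed chamber (the dominant one).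
-/

namespace RootSystemData

variable (D : RootSystemData V)

theorem neg_mem_roots_s19 {β : Module.Dual ℝ V} (hβ : β ∈ D.roots) : -β ∈ D.roots := by
  simpa [D.coroot_self β hβ, two_smul] using D.reflection_mem β hβ β hβ

variable {D}

theorem isDominant_zero : D.IsDominant 0 := fun β _ => (map_zero β).ge

theorem IsDominant.add {v w : V} (hv : D.IsDominant v) (hw : D.IsDominant w) :
    D.IsDominant (v + w) := fun β hβ => by
  rw [map_add]
  exact add_nonneg (hv β hβ) (hw β hβ)

theorem IsDominant.sameClosedChamber {v w : V} (hv : D.IsDominant v) (hw : D.IsDominant w) :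
    D.SameClosedChamber v w := by
  intro β hβ hβv
  rcases D.pos_or_neg β hβ with hpos | hneg
  · exact hw β hpos
  · have := hv (-β) hneg
    rw [LinearMap.neg_apply] at this
    linarith

theorem SameClosedChamber.isDominant_add_iff {v w : V} (hvw : D.SameClosedChamber v w) :
    D.IsDominant (v + w) ↔ D.IsDominant v ∧ D.IsDominant w := by
  refine ⟨fun hsum => ?_, fun ⟨hv, hw⟩ => hv.add hw⟩
  have hβsum : ∀ β ∈ D.pos, 0 ≤ β v + β w := fun β hβ => by simpa using hsum β hβ
  refine ⟨fun β hβ => ?_, fun β hβ => ?_⟩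
  · by_contra! hβv
    have hβw : 0 ≤ -β w := by
      simpa using hvw (-β) (D.neg_mem_roots_s19 (D.pos_subset hβ)) (by simpa using hβv)
    linarith [hβsum β hβ]
  · by_contra! hβw
    have hβv : β v ≤ 0 := by
      by_contra! hβv
      exact hβw.not_ge (hvw β (D.pos_subset hβ) hβv)
    linarith [hβsum β hβ]

theorem sameClosedChamber_and_isDominant_add_iff {v w : V} :
    D.SameClosedChamber v w ∧ D.IsDominant (v + w) ↔ D.IsDominant v ∧ D.IsDominant w :=
  ⟨fun ⟨hvw, hsum⟩ => hvw.isDominant_add_iff.mp hsum,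
    fun ⟨hv, hw⟩ => ⟨hv.sameClosedChamber hw, hv.add hw⟩⟩

end RootSystemData

open scoped Classical in
/-- `C[Λ⁺]` is realized as the span of the `τ_λ = single λ 1`, `λ ∈ Λ⁺`, inside `C[Λ]`, and the
product of `𝒜` is checked on the basis `E(λ)`. -/
theorem chi_is_algebra_hom (D : RootSystemData V)
    {Λ : Type} [Group Λ] (ν : Λ → V) (hν : ∀ a b : Λ, ν (a * b) = ν a + ν b)
    {C : Type} [Field C] :
    ((if D.IsDominant (ν (1 : Λ)) then MonoidAlgebra.single (1 : Λ) (1 : C) else 0) = 1) ∧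
    ∀ l₁ l₂ : Λ,
      (if D.SameClosedChamber (ν l₁) (ν l₂) then
          (if D.IsDominant (ν (l₁ * l₂)) then
            MonoidAlgebra.single (l₁ * l₂) (1 : C) else 0)
        else 0) =
      (if D.IsDominant (ν l₁) then MonoidAlgebra.single l₁ (1 : C) else 0) *
        (if D.IsDominant (ν l₂) then MonoidAlgebra.single l₂ (1 : C) else 0) := by
  have hν_one : ν 1 = 0 := by simpa using hν 1 1
  refine ⟨by rw [if_pos (hν_one ▸ RootSystemData.isDominant_zero)]; exact MonoidAlgebra.one_def.symm, fun l₁ l₂ => ?_⟩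
  rw [← ite_and, ite_zero_mul_ite_zero, MonoidAlgebra.single_mul_single, mul_one, hν]
  exact if_congr RootSystemData.sameClosedChamber_and_isDominant_add_iff rfl rfl
end
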